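/- Let 0 < α < 1, σ = 1 − α/2, and j ≥ 3. Then for every s with 1 ≤ s ≤ j−2, the consecutive difference of the L2-1_σ coefficients satisfies c_s^{(α,σ)} − c_{s+1}^{(α,σ)} > (α(1−α)(1+α)/2) (s+2+σ)^{−α−2} + α(1−α) (s+2+σ)^{−α−1} > 0. -/

import Mathlib

/-!
Write `u = x ^ (1 - α)` and `v = x ^ (2 - α)`. Telescoping the definitions gives
`c_s − c_{s+1} = ½ Δ³u(s−1+σ) − (2−α)⁻¹ Δ³v(s−1+σ)`
for the unit-step forward difference `Δ`.
By the mean value theorem, iterated, `Δ³ x ^ r = r (r−1) (r−2) ξ ^ (r−3)` for some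
`ξ ∈ (s−1+σ, s+2+σ)`; for `r = 1 − α` and `r = 2 − α` these are the two terms of the
bound, evaluated at points below `s+2+σ`, where the negative powers are strictly larger.
-/

/-- The coefficients `a_l^{(α,σ)}` of the L2-1_σ formula. -/
noncomputable def aCoeff (α σ : ℝ) (l : ℕ) : ℝ :=
  if l = 0 then σ ^ (1 - α)
  else ((l : ℝ) + σ) ^ (1 - α) - ((l : ℝ) - 1 + σ) ^ (1 - α)

/-- The coefficients `b_l^{(α,σ)}` of the L2-1_σ formula (for `l ≥ 1`). -/
noncomputable def bCoeff (α σ : ℝ) (l : ℕ) : ℝ :=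
  (1 / (2 - α)) * (((l : ℝ) + σ) ^ (2 - α) - ((l : ℝ) - 1 + σ) ^ (2 - α)) -
    (1 / 2) * (((l : ℝ) + σ) ^ (1 - α) + ((l : ℝ) - 1 + σ) ^ (1 - α))

/-- The coefficients `c_s^{(α,σ)}` (for `0 ≤ s ≤ j`) of the L2-1_σ formula:
`c_0 = a_0` if `j = 0`; for `j ≥ 1`, `c_0 = a_0 + b_1`,
`c_s = a_s + b_{s+1} − b_s` for `1 ≤ s ≤ j−1`, and `c_j = a_j − b_j`. -/
noncomputable def cCoeff (α σ : ℝ) (j s : ℕ) : ℝ :=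
  if j = 0 then σ ^ (1 - α)
  else if s = 0 then aCoeff α σ 0 + bCoeff α σ 1
  else if s < j then aCoeff α σ s + bCoeff α σ (s + 1) - bCoeff α σ s
  else aCoeff α σ s - bCoeff α σ s

open Set
open scoped fwdDiff

theorem exists_fwdDiff_eq_of_hasDerivAt {f f' : ℝ → ℝ} {a : ℝ}
    (hf : ∀ x ∈ Icc a (a + 1), HasDerivAt f (f' x) x) :
    ∃ ξ ∈ Ioo a (a + 1), Δ_[1] f a = f' ξ := by
  obtain ⟨ξ, hξ, hslope⟩ := exists_hasDerivAt_eq_slope f f' (lt_add_one a)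
    (fun x hx => (hf x hx).continuousAt.continuousWithinAt)
    (fun x hx => hf x (Ioo_subset_Icc_self hx))
  refine ⟨ξ, hξ, ?_⟩
  rw [hslope, add_sub_cancel_left, div_one, fwdDiff]

theorem exists_fwdDiff_iter_eq_of_hasDerivAt (n : ℕ) {f : ℕ → ℝ → ℝ} {a : ℝ}
    (hf : ∀ k ≤ n, ∀ x ∈ Icc a (a + (n + 1)), HasDerivAt (f k) (f (k + 1) x) x) :
    ∃ ξ ∈ Ioo a (a + (n + 1)), (Δ_[1])^[n + 1] (f 0) a = f (n + 1) ξ := by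
  induction n generalizing f with
  | zero =>
    simpa using exists_fwdDiff_eq_of_hasDerivAt (by simpa using hf 0 le_rfl)
  | succ n ih =>
    -- `Δⁿ⁺² f₀ = Δⁿ⁺¹ (Δ f₀)`, and `Δ fₖ` has derivative `Δ fₖ₊₁`; then one more mean value step.
    push_cast at hf ⊢
    have hΔf : ∀ k ≤ n, ∀ x ∈ Icc a (a + (n + 1)),
        HasDerivAt (Δ_[1] (f k)) (Δ_[1] (f (k + 1)) x) x := fun k hk x hx =>
      ((hf k (by omega) (x + 1) ⟨by linarith [hx.1], by linarith [hx.2]⟩).comp_add_const x 1).sub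
        (hf k (by omega) x ⟨hx.1, by linarith [hx.2]⟩)
    obtain ⟨ξ, hξ, hΔξ⟩ := ih hΔf
    obtain ⟨η, hη, hΔη⟩ := exists_fwdDiff_eq_of_hasDerivAt fun x (hx : x ∈ Icc ξ (ξ + 1)) =>
      hf (n + 1) le_rfl x ⟨by linarith [hξ.1, hx.1], by linarith [hξ.2, hx.2]⟩
    refine ⟨η, ⟨by linarith [hξ.1, hη.1], by linarith [hξ.2, hη.2]⟩, ?_⟩
    rw [Function.iterate_succ_apply, hΔξ, hΔη]

theorem hasDerivAt_descPochhammer_eval_mul_rpow (r : ℝ) (k : ℕ) {x : ℝ} (hx : 0 < x) :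
    HasDerivAt (fun y => (descPochhammer ℝ k).eval r * y ^ (r - k))
      ((descPochhammer ℝ (k + 1)).eval r * x ^ (r - (k + 1 : ℕ))) x := by
  refine ((Real.hasDerivAt_rpow_const (p := r - k) (Or.inl hx.ne')).const_mul
    ((descPochhammer ℝ k).eval r)).congr_deriv ?_
  rw [descPochhammer_succ_eval]
  push_cast
  ring_nf

theorem exists_fwdDiff_iter_rpow_eq (r : ℝ) (n : ℕ) {a : ℝ} (ha : 0 < a) :
    ∃ ξ ∈ Ioo a (a + (n + 1)),
      (Δ_[1])^[n + 1] (fun x => x ^ r) a =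
        (descPochhammer ℝ (n + 1)).eval r * ξ ^ (r - (n + 1)) := by
  have hf0 : (fun x : ℝ => x ^ r) = fun y => (descPochhammer ℝ 0).eval r * y ^ (r - (0 : ℕ)) := by
    simp
  rw [hf0]
  exact_mod_cast exists_fwdDiff_iter_eq_of_hasDerivAt n
    (f := fun k y => (descPochhammer ℝ k).eval r * y ^ (r - k))
    fun k _ x hx => hasDerivAt_descPochhammer_eval_mul_rpow r k (ha.trans_le hx.1)

theorem cCoeff_sub_cCoeff_succ (α σ : ℝ) {j s : ℕ} (hs : s ≠ 0) (hsj : s + 1 < j) :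
    cCoeff α σ j s - cCoeff α σ j (s + 1) =
      1 / 2 * (Δ_[1])^[3] (fun x => x ^ (1 - α)) ((s : ℝ) - 1 + σ) -
        1 / (2 - α) * (Δ_[1])^[3] (fun x => x ^ (2 - α)) ((s : ℝ) - 1 + σ) := by
  simp only [cCoeff, aCoeff, bCoeff, fwdDiff, Function.iterate_succ, Function.iterate_zero,
    Function.comp_apply, id, if_neg (show j ≠ 0 by omega), if_neg hs, if_neg s.succ_ne_zero,
    if_pos (show s < j by omega), if_pos hsj]
  push_cast
  ring_nf

theorem c_coeff_consecutive_difference_general (α σ : ℝ) (hα0 : 0 < α) (hα1 : α < 1)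
    (hσ : σ = 1 - α / 2) (j s : ℕ) (hs1 : 1 ≤ s) (hs2 : s ≤ j - 2) :
    cCoeff α σ j s - cCoeff α σ j (s + 1) >
        (α * (1 - α) * (1 + α) / 2) * ((s : ℝ) + 2 + σ) ^ (-α - 2) +
          α * (1 - α) * ((s : ℝ) + 2 + σ) ^ (-α - 1) ∧
      (α * (1 - α) * (1 + α) / 2) * ((s : ℝ) + 2 + σ) ^ (-α - 2) +
          α * (1 - α) * ((s : ℝ) + 2 + σ) ^ (-α - 1) > 0 := by
  have hσ0 : 0 < σ := by rw [hσ]; linarith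
  have ha : 0 < (s : ℝ) - 1 + σ := by
    have : (1 : ℝ) ≤ s := by exact_mod_cast hs1
    linarith
  have hξ_lt {ξ : ℝ} (hξ : ξ ∈ Ioo ((s : ℝ) - 1 + σ) ((s : ℝ) - 1 + σ + ((2 : ℕ) + 1))) :
      ξ < s + 2 + σ := by push_cast at hξ; linarith [hξ.2]
  obtain ⟨ξ₁, hξ₁, hΔu⟩ := exists_fwdDiff_iter_rpow_eq (1 - α) 2 ha
  obtain ⟨ξ₂, hξ₂, hΔv⟩ := exists_fwdDiff_iter_rpow_eq (2 - α) 2 ha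
  have hc : cCoeff α σ j s - cCoeff α σ j (s + 1) =
      (α * (1 - α) * (1 + α) / 2) * ξ₁ ^ (-α - 2) + α * (1 - α) * ξ₂ ^ (-α - 1) := by
    rw [cCoeff_sub_cCoeff_succ α σ (by omega) (by omega), hΔu, hΔv]
    simp only [descPochhammer_succ_eval, descPochhammer_zero, Polynomial.eval_one]
    have h2α : 2 - α ≠ 0 := by linarith
    push_cast
    field_simp
    ring_nf
  have h1α : 0 < 1 - α := by linarith
  have hα : 0 < α * (1 - α) := by positivity
  have hα' : 0 < α * (1 - α) * (1 + α) / 2 := by positivity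
  have hpos : (0 : ℝ) < s + 2 + σ := by linarith
  refine ⟨?_, by positivity⟩
  have hu : ((s : ℝ) + 2 + σ) ^ (-α - 2) < ξ₁ ^ (-α - 2) :=
    Real.rpow_lt_rpow_of_neg (ha.trans hξ₁.1) (hξ_lt hξ₁) (by linarith)
  have hv : ((s : ℝ) + 2 + σ) ^ (-α - 1) < ξ₂ ^ (-α - 1) :=
    Real.rpow_lt_rpow_of_neg (ha.trans hξ₂.1) (hξ_lt hξ₂) (by linarith)
  rw [hc]
  exact add_lt_add (mul_lt_mul_of_pos_left hu hα') (mul_lt_mul_of_pos_left hv hα)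

/-- Lemma 4, proof of (4.103), middle-range estimate (Alikhanov, L2-1_σ paper): for
`0 < α < 1`, `σ = 1 − α/2`, `j ≥ 3` and `1 ≤ s ≤ j − 2`,
`c_s − c_{s+1} > (α(1−α)(1+α)/2)(s+2+σ)^{−α−2} + α(1−α)(s+2+σ)^{−α−1} > 0`. -/
theorem c_coeff_consecutive_difference (α σ : ℝ) (hα0 : 0 < α) (hα1 : α < 1)
    (hσ : σ = 1 - α / 2) (j s : ℕ) (hj : 3 ≤ j) (hs1 : 1 ≤ s) (hs2 : s ≤ j - 2) :
    cCoeff α σ j s - cCoeff α σ j (s + 1) >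
        (α * (1 - α) * (1 + α) / 2) * ((s : ℝ) + 2 + σ) ^ (-α - 2) +
          α * (1 - α) * ((s : ℝ) + 2 + σ) ^ (-α - 1) ∧
      (α * (1 - α) * (1 + α) / 2) * ((s : ℝ) + 2 + σ) ^ (-α - 2) +
          α * (1 - α) * ((s : ℝ) + 2 + σ) ^ (-α - 1) > 0 :=
  c_coeff_consecutive_difference_general α σ hα0 hα1 hσ j s hs1 hs2
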